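/- arXiv:2603.29992 — 4 statements merged into one kernel-verified Lean document; each statement's English description precedes it below -/
import Mathlib

section
/- For every prime p ≥ 5, there exists a set A ⊆ 𝔽_p such that |A| = (p − 1)/2, 1 ∉ A + A, and 1 ∉ A·A. -/
/-!
Under `x ↦ 1 - x` and `x ↦ x⁻¹` the rational function
`θ(x) = (x + 1)(x - 2)(2x - 1) / (x(x - 1))` changes sign, and it vanishes only at
`0, 1, -1, 2, 1/2`. Taking `A` to be the `x` for which `θ(x)` lies in the lower half
`{1, …, (p - 1)/2}` of `𝔽_p` therefore picks exactly half of the other `p - 5` elements,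
and never both `x` and `1 - x`, or both `x` and `x⁻¹`. Adding `0` and `2` brings `|A|` up to
`(p - 1)/2` without creating a sum or product equal to `1`.
-/

open scoped Pointwise
open Finset

lemma ZMod.ofNat_ne_zero_of_lt {n p : ℕ} [n.AtLeastTwo] (hn : (OfNat.ofNat n : ℕ) < p) :
    (OfNat.ofNat n : ZMod p) ≠ 0 := by
  rw [← Nat.cast_ofNat, Ne, ZMod.natCast_eq_zero_iff]
  exact Nat.not_dvd_of_pos_of_lt (zero_lt_two.trans_le Nat.AtLeastTwo.prop) hn

lemma ZMod.valMinAbs_neg_of_odd {n : ℕ} (hn : Odd n) (a : ZMod n) :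
    (-a).valMinAbs = -a.valMinAbs :=
  ZMod.valMinAbs_neg_of_ne_half fun h => by obtain ⟨k, rfl⟩ := hn; omega

lemma ZMod.two_mul_card_filter_valMinAbs_pos {α : Type*} [Fintype α] {n : ℕ} (hn : Odd n)
    {σ : α → α} (hσ : Function.Involutive σ) {f : α → ZMod n} (hf : ∀ x, f (σ x) = -f x) :
    2 * #{x | 0 < (f x).valMinAbs} = #{x | f x ≠ 0} := by
  classical
  have hswap : #{x | 0 < (f x).valMinAbs} = #{x | (f x).valMinAbs < 0} := by
    refine card_nbij' σ σ ?_ ?_ (fun x _ => hσ x) (fun x _ => hσ x) <;>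
    · intro x hx
      simp only [coe_filter, mem_univ, true_and, Set.mem_ofPred_eq] at hx ⊢
      rw [hf, ZMod.valMinAbs_neg_of_odd hn]
      omega
  calc 2 * #{x | 0 < (f x).valMinAbs}
      = #{x | 0 < (f x).valMinAbs} + #{x | (f x).valMinAbs < 0} := by rw [two_mul, ← hswap]
    _ = #{x | 0 < (f x).valMinAbs ∨ (f x).valMinAbs < 0} := by
      rw [filter_or, card_union_of_disjoint (disjoint_filter.mpr fun _ _ => by omega)]
    _ = #{x | f x ≠ 0} := by
      simp only [ne_eq, ← ZMod.valMinAbs_eq_zero, lt_or_lt_iff_ne, ne_comm]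

namespace AvoidingSet

section Theta

variable {K : Type*} [Field K]

/-- At `0` and `1` the value is the junk `x / 0 = 0`, which lets `theta_one_sub` and `theta_inv`
hold without side conditions. -/
def theta (x : K) : K := (x + 1) * (x - 2) * (2 * x - 1) / (x * (x - 1))

lemma theta_one_sub (x : K) : theta (1 - x) = -theta x := by
  unfold theta
  ring

lemma theta_inv (x : K) : theta x⁻¹ = -theta x := by
  rcases eq_or_ne x 0 with rfl | h0
  · simp [theta]
  rcases eq_or_ne x 1 with rfl | h1
  · simp [theta]
  have : x - 1 ≠ 0 := sub_ne_zero.mpr h1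
  have : 1 - x ≠ 0 := sub_ne_zero.mpr h1.symm
  unfold theta
  field_simp
  ring

lemma theta_eq_zero_iff {x : K} :
    theta x = 0 ↔ x = 0 ∨ x = 1 ∨ x = -1 ∨ x = 2 ∨ x = 2⁻¹ := by
  simp only [theta, div_eq_zero_iff, mul_eq_zero, sub_eq_zero, add_eq_zero_iff_eq_neg]
  grind

lemma theta_zero : theta (0 : K) = 0 := theta_eq_zero_iff.mpr (by simp)

lemma theta_two : theta (2 : K) = 0 := theta_eq_zero_iff.mpr (by simp)

end Theta

variable {p : ℕ} [Fact p.Prime]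

lemma card_filter_theta_eq_zero (hp : 5 ≤ p) : #{x : ZMod p | theta x = 0} = 5 := by
  have h2 : (2 : ZMod p) ≠ 0 := ZMod.ofNat_ne_zero_of_lt (by omega)
  have h3 : (3 : ZMod p) ≠ 0 := ZMod.ofNat_ne_zero_of_lt (by omega)
  have hzeros : ({x : ZMod p | theta x = 0} : Finset _) = {0, 1, -1, 2, 2⁻¹} := by
    ext x
    simp only [mem_filter, mem_univ, true_and, theta_eq_zero_iff, mem_insert, mem_singleton]
  rw [hzeros, card_insert_of_notMem, card_insert_of_notMem, card_insert_of_notMem,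
    card_insert_of_notMem, card_singleton]
  all_goals simp only [mem_insert, mem_singleton, not_or]
  all_goals grind

lemma two_mul_card_filter_theta_pos (hp : 5 ≤ p) :
    2 * #{x : ZMod p | 0 < (theta x).valMinAbs} = p - 5 := by
  have hodd : Odd p := (Fact.out : p.Prime).odd_of_ne_two (by omega)
  have hσ : Function.Involutive fun x : ZMod p => 1 - x := sub_sub_cancel 1
  have hsplit := card_filter_add_card_filter_not (s := univ) fun x : ZMod p => theta x = 0
  rw [card_univ, ZMod.card, card_filter_theta_eq_zero hp] at hsplit
  rw [ZMod.two_mul_card_filter_valMinAbs_pos hodd hσ theta_one_sub]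
  simp only [ne_eq]
  omega

def avoidingSet (p : ℕ) [Fact p.Prime] : Finset (ZMod p) :=
  {0, 2} ∪ ({x : ZMod p | 0 < (theta x).valMinAbs} : Finset (ZMod p))

lemma card_avoidingSet (hp : 5 ≤ p) : #(avoidingSet p) = (p - 1) / 2 := by
  have hdisj : Disjoint ({0, 2} : Finset (ZMod p))
      ({x : ZMod p | 0 < (theta x).valMinAbs} : Finset (ZMod p)) := by
    simp [disjoint_left, theta_zero, theta_two]
  have hpair : #({0, 2} : Finset (ZMod p)) = 2 :=
    card_pair (ZMod.ofNat_ne_zero_of_lt (by omega)).symm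
  have := two_mul_card_filter_theta_pos hp
  rw [avoidingSet, card_union_of_disjoint hdisj, hpair]
  omega

lemma valMinAbs_theta_nonneg {x : ZMod p} (hx : x ∈ avoidingSet p) :
    0 ≤ (theta x).valMinAbs := by
  simp only [avoidingSet, mem_union, mem_insert, mem_singleton, mem_filter, mem_univ,
    true_and] at hx
  rcases hx with (rfl | rfl) | hx
  · simp [theta_zero]
  · simp [theta_two]
  · exact hx.le

lemma eq_zero_or_two_of_theta_eq_zero {x : ZMod p} (hx : x ∈ avoidingSet p)
    (h : theta x = 0) : x = 0 ∨ x = 2 := by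
  simpa [avoidingSet, h] using hx

lemma eq_zero_or_two_of_theta_eq_neg (hp : p ≠ 2) {a b : ZMod p} (ha : a ∈ avoidingSet p)
    (hb : b ∈ avoidingSet p) (h : theta b = -theta a) :
    (a = 0 ∨ a = 2) ∧ (b = 0 ∨ b = 2) := by
  have hv : (theta b).valMinAbs = -(theta a).valMinAbs := by
    rw [h, ZMod.valMinAbs_neg_of_odd ((Fact.out : p.Prime).odd_of_ne_two hp)]
  have ha0 := valMinAbs_theta_nonneg ha
  have hb0 := valMinAbs_theta_nonneg hb
  refine ⟨eq_zero_or_two_of_theta_eq_zero ha ?_, eq_zero_or_two_of_theta_eq_zero hb ?_⟩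
  all_goals rw [← ZMod.valMinAbs_eq_zero]; omega

end AvoidingSet

/-- For every prime `p ≥ 5` there is `A ⊆ 𝔽_p` with `|A| = (p-1)/2`,
`1 ∉ A + A` and `1 ∉ A·A`. -/
theorem exists_large_avoiding_set (p : ℕ) [Fact p.Prime] (hp : 5 ≤ p) :
    ∃ A : Finset (ZMod p),
      A.card = (p - 1) / 2 ∧ (1 : ZMod p) ∉ A + A ∧ (1 : ZMod p) ∉ A * A := by
  have h3 : (3 : ZMod p) ≠ 0 := ZMod.ofNat_ne_zero_of_lt (by omega)
  refine ⟨AvoidingSet.avoidingSet p, AvoidingSet.card_avoidingSet hp, ?_, ?_⟩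
  · rw [mem_add]
    rintro ⟨a, ha, b, hb, hab⟩
    have hb' : b = 1 - a := eq_sub_of_add_eq' hab
    have hzero_two := AvoidingSet.eq_zero_or_two_of_theta_eq_neg (by omega) ha hb
      (by rw [hb', AvoidingSet.theta_one_sub])
    grind
  · rw [mem_mul]
    rintro ⟨a, ha, b, hb, hab⟩
    have hb' : b = a⁻¹ := eq_inv_of_mul_eq_one_right hab
    have hzero_two := AvoidingSet.eq_zero_or_two_of_theta_eq_neg (by omega) ha hb
      (by rw [hb', AvoidingSet.theta_inv])
    grind
end

section
/- There do not exist a real constant c > 0 and a natural number p₀ such that for every prime p > p₀, every set A ⊆ 𝔽_p with |A| > (1/2 − c)·p satisfies 𝔽_p^× ⊆ A*. Equivalently: for every c > 0 and every p₀, there exist a prime p > p₀ and a set A ⊆ 𝔽_p with |A| > (1/2 − c)·p and 1 ∉ A*. -/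
open scoped Pointwise

/-!
Take `p ≡ 3 (mod 4)`, so that `-1` is a non-square mod `p`, and
`g(a) = a(a - 1)(a + 1)(a - 2)(2a - 1)`. Then `g(1 - a) = -g(a)` and `a⁶ g(1/a) = -g(a)`, so the
quadratic character `χ` satisfies `χ(g(1 - a)) = χ(g(1/a)) = -χ(g(a))`. Hence for
`A = {a | χ(g(a)) = 1}` neither `a + b = 1` nor `ab = 1` has a solution in `A`, while the
involution `a ↦ 1 - a` exchanges `A` with `{a | χ(g(a)) = -1}`, so `|A| ≥ (p - 5)/2`.
-/

open Finset

def skewQuintic {R : Type*} [Ring R] (a : R) : R :=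
  a * (a - 1) * (a + 1) * (a - 2) * (2 * a - 1)

section skewQuintic

variable {F : Type*} [Field F]

lemma skewQuintic_one_sub (a : F) : skewQuintic (1 - a) = -skewQuintic a := by
  unfold skewQuintic; ring

lemma skewQuintic_inv_mul (a : F) : skewQuintic a⁻¹ * (a ^ 3) ^ 2 = -skewQuintic a := by
  rcases eq_or_ne a 0 with rfl | ha
  · simp [skewQuintic]
  · unfold skewQuintic; field_simp; ring

lemma mem_of_skewQuintic_eq_zero {a : F} (h : skewQuintic a = 0) :
    a ∈ ({0, 1, -1, 2, 2⁻¹} : Set F) := by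
  simp only [skewQuintic, mul_eq_zero, sub_eq_zero, add_eq_zero_iff_eq_neg] at h
  obtain (((rfl | rfl) | rfl) | rfl) | h := h
  iterate 4 simp
  simp [eq_inv_of_mul_eq_one_left (by rw [mul_comm, h] : a * 2 = 1)]

lemma card_filter_skewQuintic_eq_zero_le [Fintype F] [DecidableEq F] :
    #{a : F | skewQuintic a = 0} ≤ 5 := by
  refine (card_le_card (t := {0, 1, -1, 2, 2⁻¹}) fun a ha => ?_).trans card_le_five
  simpa using mem_of_skewQuintic_eq_zero (mem_filter.mp ha).2

end skewQuintic

section quadraticChar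

variable {F : Type*} [Field F] [Fintype F] [DecidableEq F]

lemma quadraticChar_neg_of_neg_one (hF : quadraticChar F (-1) = -1) (x : F) :
    quadraticChar F (-x) = -quadraticChar F x := by
  rw [neg_eq_neg_one_mul x, map_mul, hF, neg_one_mul]

lemma card_eq_two_mul_card_filter_quadraticChar_eq_one_add {f σ : F → F}
    (hσ : Function.Involutive σ) (hf : ∀ a, quadraticChar F (f (σ a)) = -quadraticChar F (f a)) :
    Fintype.card F = 2 * #{a | quadraticChar F (f a) = 1} + #{a | f a = 0} := by
  have hswap : #{a | quadraticChar F (f a) = -1} = #{a | quadraticChar F (f a) = 1} := by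
    refine card_nbij' σ σ ?_ ?_ (fun a _ => hσ a) (fun a _ => hσ a) <;>
      · intro a ha
        simp only [coe_filter, Set.mem_ofPred_eq, mem_univ, true_and, hf] at ha ⊢
        simp [ha]
  calc Fintype.card F
      = ∑ a : F, ((if quadraticChar F (f a) = 1 then 1 else 0)
          + (if quadraticChar F (f a) = -1 then 1 else 0) + if f a = 0 then 1 else 0) := by
        rw [← card_univ, card_eq_sum_ones]
        refine sum_congr rfl fun a _ => ?_
        rcases eq_or_ne (f a) 0 with h | h
        · simp [h]
        · rcases quadraticChar_dichotomy h with hχ | hχ <;> simp [h, hχ]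
    _ = 2 * #{a | quadraticChar F (f a) = 1} + #{a | f a = 0} := by
        simp only [sum_add_distrib, ← card_filter, hswap]; ring

end quadraticChar

section sarkozySet

variable (F : Type*) [Field F] [Fintype F] [DecidableEq F]

def sarkozySet : Finset F := {a | quadraticChar F (skewQuintic a) = 1}

variable {F}

lemma quadraticChar_skewQuintic_one_sub (hF : quadraticChar F (-1) = -1) (a : F) :
    quadraticChar F (skewQuintic (1 - a)) = -quadraticChar F (skewQuintic a) := by
  rw [skewQuintic_one_sub, quadraticChar_neg_of_neg_one hF]

lemma quadraticChar_skewQuintic_inv (hF : quadraticChar F (-1) = -1) (a : F) :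
    quadraticChar F (skewQuintic a⁻¹) = -quadraticChar F (skewQuintic a) := by
  rcases eq_or_ne a 0 with rfl | ha
  · simp [skewQuintic]
  · rw [← quadraticChar_neg_of_neg_one hF, ← skewQuintic_inv_mul, map_mul,
      quadraticChar_sq_one' (pow_ne_zero 3 ha), mul_one]

lemma one_notMem_sarkozySet_add (hF : quadraticChar F (-1) = -1) :
    (1 : F) ∉ sarkozySet F + sarkozySet F := by
  simp only [mem_add, sarkozySet, mem_filter, mem_univ, true_and, not_exists, not_and]
  intro a ha b hb hab
  rw [eq_sub_of_add_eq' hab, quadraticChar_skewQuintic_one_sub hF, ha] at hb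
  norm_num at hb

lemma one_notMem_sarkozySet_mul (hF : quadraticChar F (-1) = -1) :
    (1 : F) ∉ sarkozySet F * sarkozySet F := by
  simp only [mem_mul, sarkozySet, mem_filter, mem_univ, true_and, not_exists, not_and]
  intro a ha b hb hab
  rw [eq_inv_of_mul_eq_one_right hab, quadraticChar_skewQuintic_inv hF, ha] at hb
  norm_num at hb

lemma card_le_two_mul_card_sarkozySet_add_five (hF : quadraticChar F (-1) = -1) :
    Fintype.card F ≤ 2 * #(sarkozySet F) + 5 := by
  rw [card_eq_two_mul_card_filter_quadraticChar_eq_one_add (σ := (1 - ·))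
    (fun a => sub_sub_cancel 1 a) (quadraticChar_skewQuintic_one_sub hF)]
  exact Nat.add_le_add_left card_filter_skewQuintic_eq_zero_le _

end sarkozySet

/-- Sárközy's Conjecture 65 is false: there are no constants `c > 0` and `p₀`
such that every prime `p > p₀` and every `A ⊆ 𝔽_p` with `|A| > (1/2 - c)·p`
satisfies `𝔽_p^× ⊆ (A + A) ∪ (A·A)`. -/
theorem sarkozy_conjecture_false :
    ¬ ∃ c : ℝ, 0 < c ∧ ∃ p₀ : ℕ, ∀ p : ℕ, p.Prime → p > p₀ →
      ∀ A : Finset (ZMod p), (A.card : ℝ) > (1 / 2 - c) * p →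
        ∀ x : ZMod p, x ≠ 0 → x ∈ (A + A) ∪ (A * A) := by
  rintro ⟨c, hc, p₀, H⟩
  obtain ⟨p, hp_gt, hp, hp4⟩ :=
    Nat.forall_exists_prime_gt_and_modEq (max p₀ ⌈5 / (2 * c)⌉₊) (q := 4) (a := 3) (by norm_num)
      (by norm_num)
  have := Fact.mk hp
  have hF : quadraticChar (ZMod p) (-1) = -1 := by
    rw [quadraticChar_neg_one_iff_not_isSquare, ZMod.exists_sq_eq_neg_one_iff, not_not]
    exact hp4
  have hcard : (p : ℝ) ≤ 2 * #(sarkozySet (ZMod p)) + 5 := by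
    exact_mod_cast ZMod.card p ▸ card_le_two_mul_card_sarkozySet_add_five hF
  have hcp : 5 / 2 < c * p := by
    have hp_c : 5 / (2 * c) < p :=
      (Nat.le_ceil _).trans_lt (by exact_mod_cast (le_max_right _ _).trans_lt hp_gt)
    rw [div_lt_iff₀ (by positivity)] at hp_c
    linarith
  have hmem := H p hp ((le_max_left _ _).trans_lt hp_gt) (sarkozySet (ZMod p)) (by linarith)
    1 one_ne_zero
  rcases mem_union.mp hmem with h | h
  · exact one_notMem_sarkozySet_add hF h
  · exact one_notMem_sarkozySet_mul hF h
end

section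
/- For every prime p ≥ 5, the maximum of |A| over all sets A ⊆ 𝔽_p satisfying 1 ∉ A + A and 1 ∉ A·A equals (p − 1)/2. -/
open scoped Pointwise

section Aux
variable {p : ℕ} [Fact p.Prime]

/-- The 3-cycle of the anharmonic group. -/
noncomputable def cc (x : ZMod p) : ZMod p := (1 - x)⁻¹

noncomputable def mm (x : ZMod p) : ℕ :=
  min x.val (min (cc x).val (cc (cc x)).val)

noncomputable def ff (x : ZMod p) : Prop :=
  if x = 0 then True else if x = 1 then False else if x = 2 then True
  else if x = -1 then False else if x = (2 : ZMod p)⁻¹ then False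
  else mm x < mm (1 - x)

lemma cc_inv (x : ZMod p) (h0 : x ≠ 0) (h1 : x ≠ 1) :
    cc (cc x) = 1 - x⁻¹ := by
  have hx : (1 : ZMod p) - x ≠ 0 := sub_ne_zero.mpr (Ne.symm h1)
  have : (1 - (1 - x)⁻¹) * (1 - x⁻¹) = 1 := by
    field_simp
    ring
  simpa [cc] using inv_eq_of_mul_eq_one_right this

lemma cc3 (x : ZMod p) (h0 : x ≠ 0) (h1 : x ≠ 1) :
    cc (cc (cc x)) = x := by
  have hx : (1 : ZMod p) - x ≠ 0 := sub_ne_zero.mpr (Ne.symm h1)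
  rw [cc_inv x h0 h1]
  rw [cc, sub_sub_cancel, inv_inv]

lemma mm_cc (x : ZMod p) (h0 : x ≠ 0) (h1 : x ≠ 1) : mm (cc x) = mm x := by
  unfold mm
  rw [cc3 x h0 h1]
  omega

lemma cc_one_sub (x : ZMod p) : cc (1 - x) = x⁻¹ := by
  rw [cc, sub_sub_cancel]

end Aux

/-- For every prime `p ≥ 5`, the maximum of `|A|` over all `A ⊆ 𝔽_p` with
`1 ∉ A + A` and `1 ∉ A·A` equals `(p-1)/2`. -/
theorem exact_extremal_value (p : ℕ) [Fact p.Prime] (hp : 5 ≤ p) :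
    IsGreatest
      {n : ℕ | ∃ A : Finset (ZMod p),
        (1 : ZMod p) ∉ A + A ∧ (1 : ZMod p) ∉ A * A ∧ A.card = n}
      ((p - 1) / 2) := by
  classical
  have hprime : p.Prime := Fact.out
  have hodd : Odd p := hprime.odd_of_ne_two (by omega)
  -- basic nonzero facts
  have h2 : (2 : ZMod p) ≠ 0 := by
    have : ((2 : ℕ) : ZMod p) ≠ 0 := by
      rw [Ne, ZMod.natCast_eq_zero_iff]
      intro h; have := Nat.le_of_dvd (by norm_num) h; omega
    simpa using this
  have h3 : (3 : ZMod p) ≠ 0 := by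
    have : ((3 : ℕ) : ZMod p) ≠ 0 := by
      rw [Ne, ZMod.natCast_eq_zero_iff]
      intro h; have := Nat.le_of_dvd (by norm_num) h
      omega
    simpa using this
  have h21 : (2 : ZMod p) * 2⁻¹ = 1 := mul_inv_cancel₀ h2
  -- evaluations at special points
  have f0 : ff (0 : ZMod p) := by simp [ff]
  have f1 : ¬ ff (1 : ZMod p) := by simp [ff]
  have f2 : ff (2 : ZMod p) := by
    have e1 : (2 : ZMod p) ≠ 1 := by
      intro h; exact one_ne_zero (α := ZMod p) (by linear_combination h)
    simp [ff, h2, e1]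
  have fm1 : ¬ ff (-1 : ZMod p) := by
    have e0 : (-1 : ZMod p) ≠ 0 := by
      intro h; exact one_ne_zero (α := ZMod p) (by linear_combination -h)
    have e1 : (-1 : ZMod p) ≠ 1 := by
      intro h; exact h2 (by linear_combination -h)
    have e2 : (-1 : ZMod p) ≠ 2 := by
      intro h; exact h3 (by linear_combination -h)
    simp [ff, e0, e1, e2]
  have fhalf : ¬ ff ((2 : ZMod p)⁻¹) := by
    have e0 : (2 : ZMod p)⁻¹ ≠ 0 := inv_ne_zero h2
    have e1 : (2 : ZMod p)⁻¹ ≠ 1 := by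
      intro h; exact one_ne_zero (α := ZMod p) (by linear_combination h21 - 2*h)
    have e2 : (2 : ZMod p)⁻¹ ≠ 2 := by
      intro h; exact h3 (by linear_combination h21 - 2*h)
    have em1 : (2 : ZMod p)⁻¹ ≠ -1 := by
      intro h; exact h3 (by linear_combination 2*h - h21)
    simp [ff, e0, e1, e2, em1]
  -- genericity
  set G : ZMod p → Prop := fun x =>
    x ≠ 0 ∧ x ≠ 1 ∧ x ≠ 2 ∧ x ≠ -1 ∧ x ≠ (2 : ZMod p)⁻¹ with hG
  have half_self : (1 : ZMod p) - 2⁻¹ = 2⁻¹ := by linear_combination -h21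
  have G_sub : ∀ x, G x → G (1 - x) := by
    rintro x ⟨e0, e1, e2, em1, eh⟩
    refine ⟨sub_ne_zero.mpr (Ne.symm e1), ?_, ?_, ?_, ?_⟩
    · intro h; exact e0 (by linear_combination -h)
    · intro h; exact em1 (by linear_combination -h)
    · intro h; exact e2 (by linear_combination -h)
    · intro h; exact eh (by linear_combination -h + half_self)
  have G_inv : ∀ x, G x → G x⁻¹ := by
    rintro x ⟨e0, e1, e2, em1, eh⟩
    have hxi : x * x⁻¹ = 1 := mul_inv_cancel₀ e0
    refine ⟨inv_ne_zero e0, fun h => e1 (by rwa [inv_eq_one] at h), ?_, ?_, ?_⟩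
    · intro h; exact eh (by rw [← inv_inv x, h])
    · intro h
      apply em1
      rw [← inv_inv x, h]
      exact inv_eq_of_mul_eq_one_right (by ring)
    · intro h; exact e2 (inv_injective h)
  have f_eval : ∀ x, G x → (ff x ↔ mm x < mm (1 - x)) := by
    rintro x ⟨e0, e1, e2, em1, eh⟩
    simp [ff, e0, e1, e2, em1, eh]
  -- the additive property
  have no_add : ∀ x : ZMod p, ¬ (ff x ∧ ff (1 - x)) := by
    intro x ⟨hx, hx'⟩
    by_cases e0 : x = 0
    · subst e0; rw [sub_zero] at hx'; exact f1 hx'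
    by_cases e1 : x = 1
    · subst e1; exact f1 hx
    by_cases e2 : x = 2
    · subst e2
      have : (1 : ZMod p) - 2 = -1 := by ring
      rw [this] at hx'; exact fm1 hx'
    by_cases em1 : x = -1
    · subst em1; exact fm1 hx
    by_cases eh : x = (2 : ZMod p)⁻¹
    · subst eh; exact fhalf hx
    · have hGx : G x := ⟨e0, e1, e2, em1, eh⟩
      have hG1x := G_sub x hGx
      rw [f_eval x hGx] at hx
      rw [f_eval _ hG1x] at hx'
      rw [sub_sub_cancel] at hx'
      omega
  -- the multiplicative property
  have no_mul : ∀ x y : ZMod p, x * y = 1 → ¬ (ff x ∧ ff y) := by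
    intro x y hxy ⟨hx, hy⟩
    have e0 : x ≠ 0 := by rintro rfl; rw [zero_mul] at hxy; exact one_ne_zero hxy.symm
    have hyx : y = x⁻¹ := (inv_eq_of_mul_eq_one_right hxy).symm
    subst hyx
    by_cases e1 : x = 1
    · subst e1; exact f1 hx
    by_cases e2 : x = 2
    · subst e2; exact fhalf hy
    by_cases em1 : x = -1
    · subst em1
      have : (-1 : ZMod p)⁻¹ = -1 := by
        exact inv_eq_of_mul_eq_one_right (by ring)
      rw [this] at hy; exact fm1 hy
    by_cases eh : x = (2 : ZMod p)⁻¹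
    · subst eh; exact fhalf hx
    · have hGx : G x := ⟨e0, e1, e2, em1, eh⟩
      have hGi := G_inv x hGx
      have hG1x := G_sub x hGx
      rw [f_eval x hGx] at hx
      rw [f_eval _ hGi] at hy
      -- m x⁻¹ = m (1-x), m (1 - x⁻¹) = m x
      have k1 : mm (x⁻¹) = mm (1 - x) := by
        rw [← cc_one_sub x]
        exact mm_cc (1 - x) hG1x.1 hG1x.2.1
      have hccx : cc x ≠ 0 := by
        have : (1 : ZMod p) - x ≠ 0 := hG1x.1
        exact inv_ne_zero this
      have hccx1 : cc x ≠ 1 := by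
        intro hcon
        rw [cc, inv_eq_one] at hcon
        exact e0 (by linear_combination -hcon)
      have k2 : mm (1 - x⁻¹) = mm x := by
        rw [← cc_inv x e0 e1, mm_cc _ hccx hccx1, mm_cc x e0 e1]
      rw [k1, k2] at hy
      omega
  -- the m-difference property for generic x
  have ne_mm : ∀ x : ZMod p, G x → mm x ≠ mm (1 - x) := by
    rintro x hGx h
    have hG1x := G_sub x hGx
    obtain ⟨e0, e1, e2, em1, eh⟩ := hGx
    have h1x0 : (1 : ZMod p) - x ≠ 0 := hG1x.1
    have h1x1 : (1 : ZMod p) - x ≠ 1 := hG1x.2.1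
    have exx : x * x⁻¹ = 1 := mul_inv_cancel₀ e0
    have e1xx : (1 - x) * (1 - x)⁻¹ = 1 := mul_inv_cancel₀ h1x0
    unfold mm at h
    rw [cc_inv x e0 e1, cc_inv (1 - x) h1x0 h1x1, cc_one_sub x] at h
    have h9 := by
      have base :
          x.val = (1 - x).val ∨ x.val = (x⁻¹).val ∨ x.val = (1 - (1 - x)⁻¹).val ∨
          (cc x).val = (1 - x).val ∨ (cc x).val = (x⁻¹).val ∨ (cc x).val = (1 - (1 - x)⁻¹).val ∨
          (1 - x⁻¹).val = (1 - x).val ∨ (1 - x⁻¹).val = (x⁻¹).val ∨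
          (1 - x⁻¹).val = (1 - (1 - x)⁻¹).val := by omega
      exact base
    have vi := ZMod.val_injective p
    have hccx : cc x = (1 - x)⁻¹ := rfl
    -- helper: x + x = 1 → contradiction
    have two_x : ¬ (x + x = 1) := by
      intro hh
      have h4 : (2 : ZMod p) * x = 1 := by linear_combination hh
      exact eh (inv_eq_of_mul_eq_one_right h4).symm
    have sq_one : ¬ (x * x = 1) := by
      intro hh
      have : (x - 1) * (x + 1) = 0 := by linear_combination hh
      rcases mul_eq_zero.mp this with h' | h'
      · exact e1 (by linear_combination h')
      · exact em1 (by linear_combination h')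
    rcases h9 with h' | h' | h' | h' | h' | h' | h' | h' | h'
    all_goals have heq := vi h'
    · -- x = 1 - x
      exact two_x (by linear_combination heq)
    · -- x = x⁻¹
      exact sq_one (by linear_combination x * heq + exx)
    · -- x = 1 - (1-x)⁻¹  →  (1-x)⁻¹ = 1 - x → (1-x)^2 = 1
      have : (1 - x) * (1 - x) = 1 := by
        linear_combination -(1 - x) * heq + e1xx
      have hf : (1 - x - 1) * (1 - x + 1) = 0 := by linear_combination this
      rcases mul_eq_zero.mp hf with h'' | h''
      · exact e0 (by linear_combination -h'')
      · exact e2 (by linear_combination -h'')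
    · -- (1-x)⁻¹ = 1 - x
      rw [hccx] at heq
      have : (1 - x) * (1 - x) = 1 := by
        linear_combination -(1 - x) * heq + e1xx
      have hf : (1 - x - 1) * (1 - x + 1) = 0 := by linear_combination this
      rcases mul_eq_zero.mp hf with h'' | h''
      · exact e0 (by linear_combination -h'')
      · exact e2 (by linear_combination -h'')
    · -- (1-x)⁻¹ = x⁻¹ → x = 1 - x
      rw [hccx] at heq
      have h6 := inv_injective heq
      exact two_x (by linear_combination -h6)
    · -- (1-x)⁻¹ = 1 - (1-x)⁻¹ → 2(1-x)⁻¹ = 1 → 1-x = 2 → x = -1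
      rw [hccx] at heq
      have h4 : (2 : ZMod p) * (1 - x)⁻¹ = 1 := by linear_combination heq
      have h5 : (1 - x)⁻¹ = 2⁻¹ := (inv_eq_of_mul_eq_one_right h4).symm
      have h6 := inv_injective h5
      exact em1 (by linear_combination -h6)
    · -- 1 - x⁻¹ = 1 - x → x⁻¹ = x
      exact sq_one (by linear_combination x * heq + exx)
    · -- 1 - x⁻¹ = x⁻¹ → 2 x⁻¹ = 1 → x = 2
      have h4 : (2 : ZMod p) * x⁻¹ = 1 := by linear_combination -heq
      have h5 : x⁻¹ = 2⁻¹ := (inv_eq_of_mul_eq_one_right h4).symm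
      exact e2 (inv_injective h5)
    · -- 1 - x⁻¹ = 1 - (1-x)⁻¹ → x⁻¹ = (1-x)⁻¹ → x = 1-x
      have h5 : x⁻¹ = (1 - x)⁻¹ := by linear_combination -heq
      have h6 := inv_injective h5
      exact two_x (by linear_combination h6)
  -- the extremal set
  set A : Finset (ZMod p) := Finset.univ.filter ff with hA
  have memA : ∀ x, x ∈ A ↔ ff x := by
    intro x; simp [hA]
  have hAadd : (1 : ZMod p) ∉ A + A := by
    rw [Finset.mem_add]
    rintro ⟨a, ha, b, hb, hab⟩
    rw [memA] at ha hb
    have : b = 1 - a := by linear_combination hab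
    subst this
    exact no_add a ⟨ha, hb⟩
  have hAmul : (1 : ZMod p) ∉ A * A := by
    rw [Finset.mem_mul]
    rintro ⟨a, ha, b, hb, hab⟩
    rw [memA] at ha hb
    exact no_mul a b hab ⟨ha, hb⟩
  -- cardinality of A
  have hinj : Function.Injective (fun x : ZMod p => 1 - x) := by
    intro a b hab
    have h' : (1 : ZMod p) - a = 1 - b := hab
    linear_combination -h'
  set B : Finset (ZMod p) := A.image (fun x => 1 - x) with hB
  have memB : ∀ z, z ∈ B ↔ ff (1 - z) := by
    intro z
    simp only [hB, Finset.mem_image]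
    constructor
    · rintro ⟨x, hx, rfl⟩
      rw [memA] at hx
      rwa [sub_sub_cancel]
    · intro h
      exact ⟨1 - z, (memA _).mpr h, by ring⟩
  have hdisj : Disjoint A B := by
    rw [Finset.disjoint_left]
    intro z hz hz'
    rw [memA] at hz
    rw [memB] at hz'
    exact no_add z ⟨hz, hz'⟩
  have hcardB : B.card = A.card := Finset.card_image_of_injective A hinj
  have hunion : A ∪ B = Finset.univ.erase ((2 : ZMod p)⁻¹) := by
    ext z
    rw [Finset.mem_union, Finset.mem_erase, memA, memB]
    constructor
    · rintro (h | h)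
      · refine ⟨?_, Finset.mem_univ z⟩
        rintro rfl; exact fhalf h
      · refine ⟨?_, Finset.mem_univ z⟩
        rintro rfl; rw [half_self] at h; exact fhalf h
    · rintro ⟨hz, -⟩
      by_cases e0 : z = 0
      · subst e0; left; exact f0
      by_cases e1 : z = 1
      · subst e1; right; simpa using f0
      by_cases e2 : z = 2
      · subst e2; left; exact f2
      by_cases em1 : z = -1
      · subst em1
        right
        have : (1 : ZMod p) - (-1) = 2 := by ring
        rw [this]; exact f2
      · have hGz : G z := ⟨e0, e1, e2, em1, hz⟩
        have hG1z := G_sub z hGz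
        have := ne_mm z hGz
        rcases Nat.lt_or_ge (mm z) (mm (1 - z)) with hlt | hge
        · left; exact (f_eval z hGz).mpr hlt
        · right
          refine (f_eval _ hG1z).mpr ?_
          rw [sub_sub_cancel]
          omega
  have hcards : A.card + A.card = p - 1 := by
    have h1 : (A ∪ B).card = A.card + B.card := Finset.card_union_of_disjoint hdisj
    have h2 : (Finset.univ.erase ((2 : ZMod p)⁻¹)).card = p - 1 := by
      rw [Finset.card_erase_of_mem (Finset.mem_univ _), Finset.card_univ, ZMod.card]
    rw [hunion, h2] at h1
    omega
  constructor
  · exact ⟨A, hAadd, hAmul, by omega⟩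
  · rintro n ⟨C, hCadd, hCmul, rfl⟩
    set D : Finset (ZMod p) := C.image (fun x => 1 - x) with hD
    have hdisjCD : Disjoint C D := by
      rw [Finset.disjoint_left]
      intro z hz hz'
      rw [hD, Finset.mem_image] at hz'
      obtain ⟨x, hx, hxz⟩ := hz'
      apply hCadd
      rw [Finset.mem_add]
      exact ⟨x, hx, z, hz, by linear_combination -hxz⟩
    have hcardD : D.card = C.card := Finset.card_image_of_injective C hinj
    have hle : C.card + D.card ≤ p := by
      have := Finset.card_union_of_disjoint hdisjCD
      have h2 : (C ∪ D).card ≤ Fintype.card (ZMod p) := Finset.card_le_univ _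
      rw [ZMod.card] at h2
      omega
    obtain ⟨k, hk⟩ := hodd
    omega
end

section
/- Let p ≥ 5 be a prime and let δ ∈ {0, 2} be the number of roots of X² − X + 1 in 𝔽_p. Then 6 divides p − 5 − δ. -/
/-- For a prime `p ≥ 5`, if `δ` is the number of roots of `X² - X + 1` in
`𝔽_p`, then `6` divides `p - 5 - δ`. -/
theorem six_dvd (p : ℕ) [Fact p.Prime] (hp : 5 ≤ p) (δ : ℕ)
    (hδ : δ = (Finset.univ.filter (fun u : ZMod p => u ^ 2 - u + 1 = 0)).card) :
    (6 : ℤ) ∣ (p : ℤ) - 5 - δ := by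
  have hp' : p.Prime := Fact.out
  have h2 : p % 2 = 1 := by
    rcases hp'.eq_two_or_odd with h | h
    · omega
    · exact h
  have h3 : p % 3 ≠ 0 := by
    intro h
    have := (hp'.eq_one_or_self_of_dvd 3 (Nat.dvd_of_mod_eq_zero h))
    omega
  have h3ne : (3 : ZMod p) ≠ 0 := by
    intro h
    have : ((3 : ℕ) : ZMod p) = 0 := by push_cast; exact h
    have := (ZMod.natCast_eq_zero_iff 3 p).mp this
    have := Nat.le_of_dvd (by norm_num) this
    omega
  rcases Nat.lt_or_ge (p % 3) 2 with h31 | h32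
  · -- p % 3 = 1 : two roots
    have hmod : p % 3 = 1 := by omega
    -- get a primitive cube root of unity
    obtain ⟨g, hg⟩ := IsCyclic.exists_generator (α := (ZMod p)ˣ)
    have hcardF : Fintype.card (ZMod p)ˣ = p - 1 := ZMod.card_units p
    have hcard : Nat.card (ZMod p)ˣ = p - 1 := by
      rw [Nat.card_eq_fintype_card, hcardF]
    have horder : orderOf g = p - 1 := by
      rw [orderOf_eq_card_of_forall_mem_zpowers hg, hcard]
    set k := (p - 1) / 3 with hk
    have hk3 : 3 * k = p - 1 := by omega
    have hne : g ^ k ≠ 1 := by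
      apply pow_ne_one_of_lt_orderOf
      · omega
      · omega
    have hcube : (g ^ k) ^ 3 = 1 := by
      rw [← pow_mul, mul_comm, hk3, ← hcardF]
      exact pow_card_eq_one
    set u : ZMod p := ((g ^ k : (ZMod p)ˣ) : ZMod p) with hu
    have hu3 : u ^ 3 = 1 := by
      rw [hu, ← Units.val_pow_eq_pow_val, hcube, Units.val_one]
    have hune : u ≠ 1 := by
      intro h
      exact hne (Units.val_eq_one.mp h)
    have hq : u ^ 2 + u + 1 = 0 := by
      have hfac : (u - 1) * (u ^ 2 + u + 1) = 0 := by linear_combination hu3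
      rcases mul_eq_zero.mp hfac with h | h
      · exact absurd (by linear_combination h : u = 1) hune
      · exact h
    have hset : (Finset.univ.filter (fun x : ZMod p => x ^ 2 - x + 1 = 0)) =
        {-u, -(u * u)} := by
      ext x
      simp only [Finset.mem_filter, Finset.mem_univ, true_and, Finset.mem_insert,
        Finset.mem_singleton]
      constructor
      · intro hx
        have hfac : (x + u) * (x + u * u) = 0 := by linear_combination hx + x * hq + hu3
        rcases mul_eq_zero.mp hfac with h | h
        · left; linear_combination h
        · right; linear_combination h
      · rintro (rfl | rfl)
        · linear_combination hq
        · linear_combination (u + 1) * hu3 + (2 - u) * hq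
    have hne2 : -u ≠ -(u * u) := by
      intro h
      have hueq : u * u = u := by linear_combination h
      exact hune (by linear_combination hu3 - u * hueq - hueq)
    have hδ2 : δ = 2 := by
      rw [hδ, hset]
      rw [Finset.card_insert_of_notMem (by simpa using hne2), Finset.card_singleton]
    subst hδ2
    omega
  · -- p % 3 = 2 : no roots
    have hmod : p % 3 = 2 := by omega
    have hset : (Finset.univ.filter (fun x : ZMod p => x ^ 2 - x + 1 = 0)) = ∅ := by
      ext x
      simp only [Finset.mem_filter, Finset.mem_univ, true_and, Finset.notMem_empty,
        iff_false]
      intro hx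
      have hx0 : x ≠ 0 := by
        intro h0
        rw [h0] at hx
        simp at hx
      have hx3 : x ^ 3 = -1 := by linear_combination (x + 1) * hx
      have hx6 : x ^ 6 = 1 := by
        have : (x ^ 3) ^ 2 = 1 := by rw [hx3]; ring
        rw [← pow_mul] at this
        simpa using this
      have hxp : x ^ (p - 1) = 1 := ZMod.pow_card_sub_one_eq_one hx0
      obtain ⟨q, hq⟩ : ∃ q, p - 1 = 6 * q + 4 := ⟨(p - 1) / 6, by omega⟩
      have hx4 : x ^ 4 = 1 := by
        have : x ^ (6 * q + 4) = 1 := by rw [← hq]; exact hxp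
        rw [pow_add, pow_mul, hx6, one_pow, one_mul] at this
        exact this
      have hx2 : x ^ 2 = 1 := by
        have : x ^ 6 = x ^ 4 * x ^ 2 := by ring
        rw [hx6, hx4, one_mul] at this
        exact this.symm
      have hfac : (x - 1) * (x + 1) = 0 := by linear_combination hx2
      rcases mul_eq_zero.mp hfac with h | h
      · have hx1 : x = 1 := by linear_combination h
        rw [hx1] at hx
        simp at hx
      · have hx1 : x = -1 := by linear_combination h
        rw [hx1] at hx
        exact h3ne (by linear_combination hx)
    have hδ0 : δ = 0 := by rw [hδ, hset]; simp
    subst hδ0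
    omega
end
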